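/- Let Φ be a reduced crystallographic root system of type E₇ in a 7-dimensional real inner product space, with base e₁,…,e₇ whose Cartan matrix has C_{ii} = 2, off-diagonal entries C_{ij} = C_{ji} = −1 exactly for the pairs {1,2}, {2,3}, {3,4}, {1,5}, {5,6}, {1,7}, and all other off-diagonal entries 0 (so e₁ is the trivalent node). Let W₀ be the subgroup of the orthogonal group generated by the reflections s_{e₂},…,s_{e₇}. If v = Σᵢ αᵢ eᵢ and v′ = Σᵢ αᵢ′ eᵢ are roots of Φ with α₁ ≠ 0, then v′ lies in the W₀-orbit of v if and only if α₁′ = α₁. -/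

import Mathlib

open scoped BigOperators
open RealInnerProductSpace

/-- A reduced crystallographic root system `Φ` in a real inner product space. -/
structure IsReducedCrystallographicRootSystem
    {V : Type*} [NormedAddCommGroup V] [InnerProductSpace ℝ V] (Φ : Set V) : Prop where
  finite : Φ.Finite
  span_top : Submodule.span ℝ Φ = ⊤
  ne_zero : ∀ v ∈ Φ, v ≠ 0
  reduced : ∀ v ∈ Φ, ∀ t : ℝ, t • v ∈ Φ → t = 1 ∨ t = -1
  reflect_mem : ∀ v ∈ Φ, ∀ w ∈ Φ, w - (2 * ⟪v, w⟫ / ⟪v, v⟫) • v ∈ Φ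
  crystallographic : ∀ v ∈ Φ, ∀ w ∈ Φ, ∃ z : ℤ, 2 * ⟪v, w⟫ / ⟪v, v⟫ = (z : ℝ)

/-- `e` is a base (simple system) for the root system `Φ`: each `e i` is a root, the `e i`
are linearly independent, and every root is an integer combination of the `e i` with all
coefficients of the same sign. -/
structure IsBase {V : Type*} [NormedAddCommGroup V] [InnerProductSpace ℝ V]
    (Φ : Set V) {n : ℕ} (e : Fin n → V) : Prop where
  mem : ∀ i, e i ∈ Φ
  indep : LinearIndependent ℝ e
  coords : ∀ v ∈ Φ, ∃ α : Fin n → ℤ,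
    v = ∑ i, (α i : ℝ) • e i ∧ ((∀ i, 0 ≤ α i) ∨ (∀ i, α i ≤ 0))

/-- The edges of the Dynkin diagram of type `E₇` (0-indexed: `eᵢ` is index `i - 1`). -/
def dynkinEdges : Finset (Fin 7 × Fin 7) := {(0, 1), (1, 2), (2, 3), (0, 4), (4, 5), (0, 6)}

/-- The Cartan matrix of type `E₇` with the indicated Dynkin diagram. -/
def cartanMatrix (i j : Fin 7) : ℝ :=
  if i = j then 2
  else if (i, j) ∈ dynkinEdges ∨ (j, i) ∈ dynkinEdges then -1 else 0

def CzM (i j : Fin 7) : ℤ :=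
  if i = j then 2
  else if (i = 0 ∧ j = 1) ∨ (i = 1 ∧ j = 2) ∨ (i = 2 ∧ j = 3) ∨ (i = 0 ∧ j = 4) ∨
      (i = 4 ∧ j = 5) ∨ (i = 0 ∧ j = 6) ∨
      (j = 0 ∧ i = 1) ∨ (j = 1 ∧ i = 2) ∨ (j = 2 ∧ i = 3) ∨ (j = 0 ∧ i = 4) ∨
      (j = 4 ∧ i = 5) ∨ (j = 0 ∧ i = 6) then -1 else 0

def kZ (a : Fin 7 → ℤ) (j : Fin 7) : ℤ := ∑ i, a i * CzM i j

def QZ (a : Fin 7 → ℤ) : ℤ := ∑ j, a j * kZ a j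

lemma QZ_expand (a : Fin 7 → ℤ) :
    QZ a = 2*(a 0)^2 + 2*(a 1)^2 + 2*(a 2)^2 + 2*(a 3)^2 + 2*(a 4)^2 + 2*(a 5)^2 + 2*(a 6)^2
      - 2*(a 0)*(a 1) - 2*(a 1)*(a 2) - 2*(a 2)*(a 3) - 2*(a 0)*(a 4) - 2*(a 4)*(a 5)
      - 2*(a 0)*(a 6) := by
  simp [QZ, kZ, CzM, Fin.sum_univ_seven]; ring

lemma kZ_exp1 (a : Fin 7 → ℤ) : kZ a 1 = -(a 0) + 2*(a 1) - a 2 := by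
  simp [kZ, CzM, Fin.sum_univ_seven]; ring
lemma kZ_exp2 (a : Fin 7 → ℤ) : kZ a 2 = -(a 1) + 2*(a 2) - a 3 := by
  simp [kZ, CzM, Fin.sum_univ_seven]; ring
lemma kZ_exp3 (a : Fin 7 → ℤ) : kZ a 3 = -(a 2) + 2*(a 3) := by
  simp [kZ, CzM, Fin.sum_univ_seven]; ring
lemma kZ_exp4 (a : Fin 7 → ℤ) : kZ a 4 = -(a 0) + 2*(a 4) - a 5 := by
  simp [kZ, CzM, Fin.sum_univ_seven]; ring
lemma kZ_exp5 (a : Fin 7 → ℤ) : kZ a 5 = -(a 4) + 2*(a 5) := by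
  simp [kZ, CzM, Fin.sum_univ_seven]; ring
lemma kZ_exp6 (a : Fin 7 → ℤ) : kZ a 6 = -(a 0) + 2*(a 6) := by
  simp [kZ, CzM, Fin.sum_univ_seven]; ring

lemma QZ_single (j : Fin 7) : QZ (fun i => if i = j then 1 else 0) = 2 := by
  fin_cases j <;> decide

lemma QZ_neg (a : Fin 7 → ℤ) : QZ (fun i => -a i) = QZ a := by
  rw [QZ_expand, QZ_expand]; ring

lemma mem_dynkinEdges (p : Fin 7 × Fin 7) :
    p ∈ dynkinEdges ↔ p = (0,1) ∨ p = (1,2) ∨ p = (2,3) ∨ p = (0,4) ∨ p = (4,5) ∨ p = (0,6) := by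
  simp [dynkinEdges]

lemma cart_eq (i j : Fin 7) : cartanMatrix i j = (CzM i j : ℝ) := by
  unfold cartanMatrix CzM
  simp only [mem_dynkinEdges, Prod.mk.injEq]
  fin_cases i <;> fin_cases j <;> norm_num [Fin.ext_iff, or_assoc]

section Geo

variable {V : Type*} [NormedAddCommGroup V] [InnerProductSpace ℝ V]

/-- integer combination of the base -/
noncomputable def combE (e : Fin 7 → V) (a : Fin 7 → ℤ) : V := ∑ i, (a i : ℝ) • e i

lemma combE_inj {e : Fin 7 → V} (he : LinearIndependent ℝ e) {a b : Fin 7 → ℤ}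
    (h : combE e a = combE e b) : a = b := by
  have h2 : ∑ i, ((a i : ℝ) - (b i : ℝ)) • e i = 0 := by
    simp only [sub_smul, Finset.sum_sub_distrib]
    rw [show (∑ i, (a i : ℝ) • e i) = combE e a from rfl,
      show (∑ i, (b i : ℝ) • e i) = combE e b from rfl, h, sub_self]
  have h3 := Fintype.linearIndependent_iff.mp he _ h2
  funext i
  have := h3 i
  exact_mod_cast sub_eq_zero.mp this

variable {Φ : Set V} (hΦ : IsReducedCrystallographicRootSystem Φ)
  {e : Fin 7 → V} (hbase : IsBase Φ e)
  (hC : ∀ i j, 2 * ⟪e i, e j⟫ / ⟪e j, e j⟫ = cartanMatrix i j)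

include hΦ hbase hC

lemma inner_self_ne (i : Fin 7) : ⟪e i, e i⟫ ≠ 0 :=
  inner_self_ne_zero.mpr (hΦ.ne_zero _ (hbase.mem i))

lemma nbr_eq {i j : Fin 7} (hij : CzM i j = -1) (hji : CzM j i = -1) :
    ⟪e i, e i⟫ = ⟪e j, e j⟫ := by
  have h1 := hC i j; have h2 := hC j i
  rw [cart_eq, hij] at h1; rw [cart_eq, hji] at h2
  rw [div_eq_iff (inner_self_ne hΦ hbase hC j)] at h1
  rw [div_eq_iff (inner_self_ne hΦ hbase hC i)] at h2
  rw [real_inner_comm] at h2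
  push_cast at h1 h2
  linarith

lemma inner_self_e (i : Fin 7) : ⟪e i, e i⟫ = ⟪e 0, e 0⟫ := by
  have n01 : ⟪e (0:Fin 7), e (0:Fin 7)⟫ = ⟪e 1, e 1⟫ := nbr_eq hΦ hbase hC (by decide) (by decide)
  have n12 : ⟪e (1:Fin 7), e (1:Fin 7)⟫ = ⟪e 2, e 2⟫ := nbr_eq hΦ hbase hC (by decide) (by decide)
  have n23 : ⟪e (2:Fin 7), e (2:Fin 7)⟫ = ⟪e 3, e 3⟫ := nbr_eq hΦ hbase hC (by decide) (by decide)
  have n04 : ⟪e (0:Fin 7), e (0:Fin 7)⟫ = ⟪e 4, e 4⟫ := nbr_eq hΦ hbase hC (by decide) (by decide)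
  have n45 : ⟪e (4:Fin 7), e (4:Fin 7)⟫ = ⟪e 5, e 5⟫ := nbr_eq hΦ hbase hC (by decide) (by decide)
  have n06 : ⟪e (0:Fin 7), e (0:Fin 7)⟫ = ⟪e 6, e 6⟫ := nbr_eq hΦ hbase hC (by decide) (by decide)
  fin_cases i <;> simp_all

lemma gram (i j : Fin 7) : ⟪e i, e j⟫ = (CzM i j : ℝ) * (⟪e 0, e 0⟫ / 2) := by
  have h := hC i j
  rw [cart_eq, div_eq_iff (inner_self_ne hΦ hbase hC j)] at h
  rw [inner_self_e hΦ hbase hC j] at h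
  linarith

lemma inner_comb_e (a : Fin 7 → ℤ) (j : Fin 7) :
    ⟪combE e a, e j⟫ = (kZ a j : ℝ) * (⟪e 0, e 0⟫ / 2) := by
  rw [combE, sum_inner]
  have : ∀ i, ⟪(a i : ℝ) • e i, e j⟫ = (a i : ℝ) * ((CzM i j : ℝ) * (⟪e 0, e 0⟫ / 2)) := by
    intro i; rw [real_inner_smul_left, gram hΦ hbase hC]
  simp only [this]
  rw [kZ]; push_cast; rw [Finset.sum_mul]
  exact Finset.sum_congr rfl fun i _ => by ring

lemma inner_self_comb (a : Fin 7 → ℤ) :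
    ⟪combE e a, combE e a⟫ = (QZ a : ℝ) * (⟪e 0, e 0⟫ / 2) := by
  nth_rewrite 2 [combE]
  rw [inner_sum]
  have : ∀ j, ⟪combE e a, (a j : ℝ) • e j⟫ = (a j : ℝ) * ((kZ a j : ℝ) * (⟪e 0, e 0⟫ / 2)) := by
    intro j; rw [real_inner_smul_right, inner_comb_e hΦ hbase hC]
  simp only [this]
  rw [QZ]; push_cast; rw [Finset.sum_mul]
  exact Finset.sum_congr rfl fun j _ => by ring

lemma coeff_eq (a : Fin 7 → ℤ) (j : Fin 7) :
    2 * ⟪e j, combE e a⟫ / ⟪e j, e j⟫ = (kZ a j : ℝ) := by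
  rw [real_inner_comm, inner_comb_e hΦ hbase hC, inner_self_e hΦ hbase hC j]
  have h0 := inner_self_ne hΦ hbase hC 0
  field_simp

end Geo

section Geo2

variable {V : Type*} [NormedAddCommGroup V] [InnerProductSpace ℝ V] [FiniteDimensional ℝ V]

lemma rips {x : V} (hx : x ≠ 0) : 0 < ⟪x, x⟫ :=
  lt_of_le_of_ne real_inner_self_nonneg (Ne.symm (inner_self_ne_zero.mpr hx))

lemma refl_formula (u x : V) :
    Submodule.reflection ((Submodule.span ℝ {u})ᗮ) x = x - (2 * ⟪u, x⟫ / ⟪u, u⟫) • u := by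
  rw [Submodule.reflection_apply, Submodule.starProjection_orthogonal_val, Submodule.starProjection_singleton,
    real_inner_self_eq_norm_sq]
  rw [two_smul]
  push_cast
  have : (2 * ⟪u, x⟫ / ‖u‖ ^ 2) • u = (⟪u, x⟫ / ‖u‖ ^ 2) • u + (⟪u, x⟫ / ‖u‖ ^ 2) • u := by
    rw [← add_smul]; ring_nf
  rw [this]; abel

lemma combE_update (e : Fin 7 → V) (a : Fin 7 → ℤ) (j : Fin 7) (t : ℤ) :
    combE e (Function.update a j t) = combE e a + ((t - a j : ℤ) : ℝ) • e j := by
  have key : ∀ i, ((Function.update a j t i : ℤ) : ℝ) • e i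
      = (a i : ℝ) • e i + (if i = j then ((t - a j : ℤ) : ℝ) • e j else 0) := by
    intro i
    by_cases hij : i = j
    · subst hij; rw [Function.update_self, if_pos rfl, ← add_smul]; push_cast; ring_nf
    · rw [Function.update_of_ne hij, if_neg hij, add_zero]
  rw [combE, combE]
  simp only [key, Finset.sum_add_distrib, Finset.sum_ite_eq' Finset.univ j
    (fun _ => ((t - a j : ℤ) : ℝ) • e j), Finset.mem_univ, if_pos]

variable {Φ : Set V} (hΦ : IsReducedCrystallographicRootSystem Φ)
  {e : Fin 7 → V} (hbase : IsBase Φ e)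
  (hC : ∀ i j, 2 * ⟪e i, e j⟫ / ⟪e j, e j⟫ = cartanMatrix i j)

include hΦ hbase hC

lemma refl_comb (a : Fin 7 → ℤ) (j : Fin 7) :
    Submodule.reflection ((Submodule.span ℝ {e j})ᗮ) (combE e a)
      = combE e (Function.update a j (a j - kZ a j)) := by
  rw [refl_formula, coeff_eq hΦ hbase hC, combE_update]
  push_cast
  have : (((a j : ℝ) - (kZ a j : ℝ)) - (a j : ℝ)) = -(kZ a j : ℝ) := by ring
  rw [this, neg_smul, sub_eq_add_neg]

lemma root_update_mem {a : Fin 7 → ℤ} (hv : combE e a ∈ Φ) (j : Fin 7) :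
    combE e (Function.update a j (a j - kZ a j)) ∈ Φ := by
  have h := hΦ.reflect_mem (e j) (hbase.mem j) _ hv
  rw [coeff_eq hΦ hbase hC] at h
  rw [combE_update]
  rw [show ((a j - kZ a j - a j : ℤ) : ℝ) = -(kZ a j : ℝ) by push_cast; ring]
  rw [neg_smul, ← sub_eq_add_neg]
  exact h

omit hC in
lemma sign_dichotomy {a : Fin 7 → ℤ} (hv : combE e a ∈ Φ) :
    (∀ i, 0 ≤ a i) ∨ (∀ i, a i ≤ 0) := by
  obtain ⟨b, hb, hsign⟩ := hbase.coords _ hv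
  have : a = b := combE_inj hbase.indep (by rw [hb]; rfl)
  rw [this]; exact hsign

omit hbase hC in
lemma neg_mem {v : V} (hv : v ∈ Φ) : -v ∈ Φ := by
  have h := hΦ.reflect_mem v hv v hv
  have hne : ⟪v, v⟫ ≠ 0 := inner_self_ne_zero.mpr (hΦ.ne_zero v hv)
  rw [show 2 * ⟪v, v⟫ / ⟪v, v⟫ = 2 by field_simp] at h
  rw [show v - (2:ℝ) • v = -v by rw [two_smul]; abel] at h
  exact h

omit hΦ hbase hC in
lemma combE_neg (e : Fin 7 → V) (a : Fin 7 → ℤ) : combE e (fun i => -a i) = -combE e a := by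
  rw [combE, combE, ← Finset.sum_neg_distrib]
  exact Finset.sum_congr rfl fun i _ => by push_cast; rw [neg_smul]

lemma QZ_pos {a : Fin 7 → ℤ} (hv : combE e a ∈ Φ) : 0 < QZ a := by
  have h1 : (0:ℝ) < ⟪combE e a, combE e a⟫ :=
    rips (hΦ.ne_zero _ hv)
  have hN : (0:ℝ) < ⟪e 0, e 0⟫ :=
    rips (hΦ.ne_zero _ (hbase.mem 0))
  rw [inner_self_comb hΦ hbase hC] at h1
  by_contra hq
  push_neg at hq
  have : (QZ a : ℝ) ≤ 0 := by exact_mod_cast hq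
  nlinarith

lemma comb_single {a : Fin 7 → ℤ} (j : Fin 7) (hone : ∀ m, m ≠ j → a m = 0) :
    combE e a = (a j : ℝ) • e j := by
  rw [combE, Finset.sum_eq_single j]
  · intro b _ hbj; rw [hone b hbj]; simp
  · intro h; exact absurd (Finset.mem_univ j) h

lemma QZ_eq_two : ∀ a : Fin 7 → ℤ, combE e a ∈ Φ → QZ a = 2 := by
  have key : ∀ n : ℕ, ∀ a : Fin 7 → ℤ, (∀ i, 0 ≤ a i) → combE e a ∈ Φ →
      (∑ i, a i) ≤ (n : ℤ) → QZ a = 2 := by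
    intro n
    induction n with
    | zero =>
      intro a hp hv hs
      exfalso
      have hz : ∀ i, a i = 0 := by
        intro i
        have h1 : a i ≤ ∑ k, a k := Finset.single_le_sum (fun k _ => hp k) (Finset.mem_univ i)
        have := hp i
        omega
      apply hΦ.ne_zero _ hv
      rw [combE]
      apply Finset.sum_eq_zero
      intro i _
      rw [hz i]; simp
    | succ n ih =>
      intro a hp hv hs
      have hQpos := QZ_pos hΦ hbase hC hv
      have hex : ∃ j, 1 ≤ a j ∧ 1 ≤ kZ a j := by
        by_contra hcon
        push_neg at hcon
        have hnp : QZ a ≤ 0 := by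
          rw [QZ]
          apply Finset.sum_nonpos
          intro j _
          rcases (hp j).lt_or_eq with h | h
          · exact mul_nonpos_of_nonneg_of_nonpos (by omega) (by have := hcon j (by omega); omega)
          · rw [← h]; simp
        omega
      obtain ⟨j, haj, hkj⟩ := hex
      by_cases hone : ∀ m, m ≠ j → a m = 0
      · have hcomb := comb_single hΦ hbase hC j hone
        have hred := hΦ.reduced (e j) (hbase.mem j) (a j : ℝ) (by rw [← hcomb]; exact hv)
        have haj1 : a j = 1 := by
          rcases hred with h | h
          · exact_mod_cast h
          · exfalso; have : (a j : ℝ) ≥ 1 := by exact_mod_cast haj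
            rw [h] at this; linarith
        have : a = fun i => if i = j then 1 else 0 := by
          funext i
          by_cases hij : i = j
          · rw [if_pos hij, hij, haj1]
          · rw [if_neg hij, hone i hij]
        rw [this, QZ_single]
      · push_neg at hone
        obtain ⟨m, hmj, hm0⟩ := hone
        set a' := Function.update a j (a j - kZ a j) with ha'
        have hv' : combE e a' ∈ Φ := root_update_mem hΦ hbase hC hv j
        have hp' : ∀ i, 0 ≤ a' i := by
          rcases sign_dichotomy hΦ hbase hv' with h | h
          · exact h
          · exfalso
            have h1 : a' m = a m := Function.update_of_ne hmj _ _
            have h2 := h m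
            have := hp m
            omega
        have hdiff : ∑ i, a' i = (∑ i, a i) - kZ a j := by
          have : ∑ i, (a' i - a i) = -kZ a j := by
            rw [Finset.sum_eq_single j]
            · rw [ha', Function.update_self]; ring
            · intro b _ hbj; rw [ha', Function.update_of_ne hbj]; ring
            · intro h; exact absurd (Finset.mem_univ j) h
          rw [Finset.sum_sub_distrib] at this
          omega
        have hsum' : ∑ i, a' i ≤ (n : ℤ) := by
          rw [hdiff]; push_cast at hs ⊢; omega
        have hQ' : QZ a' = QZ a := by
          have h1 : ⟪combE e a', combE e a'⟫ = ⟪combE e a, combE e a⟫ := by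
            rw [← refl_comb hΦ hbase hC]
            exact (Submodule.reflection ((Submodule.span ℝ {e j})ᗮ)).inner_map_map _ _
          rw [inner_self_comb hΦ hbase hC, inner_self_comb hΦ hbase hC] at h1
          have hN : (⟪e 0, e 0⟫ : ℝ) / 2 ≠ 0 := by
            have := rips (hΦ.ne_zero _ (hbase.mem 0))
            positivity
          exact_mod_cast mul_right_cancel₀ hN h1
        rw [← hQ']
        exact ih a' hp' hv' hsum'
  intro a hv
  rcases sign_dichotomy hΦ hbase hv with hpos | hneg
  · exact key (∑ i, a i).toNat a hpos hv (Int.self_le_toNat _)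
  · have hv' : combE e (fun i => -a i) ∈ Φ := by
      rw [combE_neg]; exact neg_mem hΦ hv
    rw [← QZ_neg]
    exact key (∑ i, -a i).toNat _ (fun i => by have := hneg i; omega) hv' (Int.self_le_toNat _)

end Geo2


lemma intSqBound {A b : ℤ} (hb : 0 ≤ b) (h : A^2 < (b+1)^2) : -b ≤ A ∧ A ≤ b := by
  constructor <;> nlinarith [sq_nonneg (A - b - 1), sq_nonneg (A + b + 1)]

lemma c_le_four {c : ℤ} (hc : 1 ≤ c) (h : c^2 ≤ 24) : c ≤ 4 := by nlinarith

/-- the classification of antidominant vectors of norm 2 -/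
lemma classify (c x1 x2 x3 y1 y2 z : ℤ)
    (hx1 : 0 ≤ x1) (hx2 : 0 ≤ x2) (hx3 : 0 ≤ x3) (hy1 : 0 ≤ y1) (hy2 : 0 ≤ y2) (hz : 0 ≤ z)
    (hc : 1 ≤ c)
    (k1 : -c + 2*x1 - x2 ≤ 0) (k2 : -x1 + 2*x2 - x3 ≤ 0) (k3 : -x2 + 2*x3 ≤ 0)
    (k4 : -c + 2*y1 - y2 ≤ 0) (k5 : -y1 + 2*y2 ≤ 0) (k6 : -c + 2*z ≤ 0)
    (hQ : 2*c^2 + 2*x1^2 + 2*x2^2 + 2*x3^2 + 2*y1^2 + 2*y2^2 + 2*z^2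
      - 2*c*x1 - 2*x1*x2 - 2*x2*x3 - 2*c*y1 - 2*y1*y2 - 2*c*z = 2) :
    (c = 1 ∧ x1 = 0 ∧ x2 = 0 ∧ x3 = 0 ∧ y1 = 0 ∧ y2 = 0 ∧ z = 0) ∨
    (c = 2 ∧ x1 = 1 ∧ x2 = 0 ∧ x3 = 0 ∧ y1 = 1 ∧ y2 = 0 ∧ z = 1) ∨
    (c = 3 ∧ x1 = 2 ∧ x2 = 1 ∧ x3 = 0 ∧ y1 = 2 ∧ y2 = 1 ∧ z = 1) ∨
    (c = 4 ∧ x1 = 3 ∧ x2 = 2 ∧ x3 = 1 ∧ y1 = 2 ∧ y2 = 1 ∧ z = 2) := by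
  have key : c^2 + (6*(2*x1-x2-c)^2 + 2*(3*x2-2*x3-c)^2 + (4*x3-c)^2 + 6*(2*y1-y2-c)^2
      + 2*(3*y2-c)^2 + 6*(2*z-c)^2) = 24 := by linear_combination 12*hQ
  have sA := sq_nonneg (2*x1-x2-c)
  have sB := sq_nonneg (3*x2-2*x3-c)
  have sC := sq_nonneg (4*x3-c)
  have sD := sq_nonneg (2*y1-y2-c)
  have sE := sq_nonneg (3*y2-c)
  have sF := sq_nonneg (2*z-c)
  have h24 : c^2 ≤ 24 := by linarith
  have hc4 : c ≤ 4 := c_le_four hc h24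
  clear hQ h24
  interval_cases c
  · left; omega
  · right; left
    obtain ⟨hA1, hA2⟩ := intSqBound (A := 2*x1-x2-2) (b := 1) (by norm_num) (by linarith)
    obtain ⟨hD1, hD2⟩ := intSqBound (A := 2*y1-y2-2) (b := 1) (by norm_num) (by linarith)
    obtain ⟨hF1, hF2⟩ := intSqBound (A := 2*z-2) (b := 1) (by norm_num) (by linarith)
    omega
  · right; right; left
    obtain ⟨hA1, hA2⟩ := intSqBound (A := 2*x1-x2-3) (b := 1) (by norm_num) (by linarith)
    obtain ⟨hB1, hB2⟩ := intSqBound (A := 3*x2-2*x3-3) (b := 2) (by norm_num) (by linarith)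
    obtain ⟨hC1, hC2⟩ := intSqBound (A := 4*x3-3) (b := 3) (by norm_num) (by linarith)
    obtain ⟨hD1, hD2⟩ := intSqBound (A := 2*y1-y2-3) (b := 1) (by norm_num) (by linarith)
    obtain ⟨hE1, hE2⟩ := intSqBound (A := 3*y2-3) (b := 2) (by norm_num) (by linarith)
    obtain ⟨hF1, hF2⟩ := intSqBound (A := 2*z-3) (b := 1) (by norm_num) (by linarith)
    omega
  · right; right; right
    obtain ⟨hA1, hA2⟩ := intSqBound (A := 2*x1-x2-4) (b := 1) (by norm_num) (by linarith)
    obtain ⟨hB1, hB2⟩ := intSqBound (A := 3*x2-2*x3-4) (b := 2) (by norm_num) (by linarith)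
    obtain ⟨hC1, hC2⟩ := intSqBound (A := 4*x3-4) (b := 2) (by norm_num) (by linarith)
    obtain ⟨hD1, hD2⟩ := intSqBound (A := 2*y1-y2-4) (b := 1) (by norm_num) (by linarith)
    obtain ⟨hE1, hE2⟩ := intSqBound (A := 3*y2-4) (b := 2) (by norm_num) (by linarith)
    obtain ⟨hF1, hF2⟩ := intSqBound (A := 2*z-4) (b := 1) (by norm_num) (by linarith)
    omega

section Geo3

variable {V : Type*} [NormedAddCommGroup V] [InnerProductSpace ℝ V] [FiniteDimensional ℝ V]
  {Φ : Set V} (hΦ : IsReducedCrystallographicRootSystem Φ)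
  {e : Fin 7 → V} (hbase : IsBase Φ e)
  (hC : ∀ i j, 2 * ⟪e i, e j⟫ / ⟪e j, e j⟫ = cartanMatrix i j)
  {W₀ : Subgroup (V ≃ₗᵢ[ℝ] V)}
  (hW₀ : W₀ = Subgroup.closure
    {w | ∃ j : Fin 7, j ≠ 0 ∧ w = Submodule.reflection ((Submodule.span ℝ {e j})ᗮ)})

include hΦ hbase hC hW₀

lemma descend : ∀ n : ℕ, ∀ a : Fin 7 → ℤ, (∀ i, 0 ≤ a i) → 1 ≤ a 0 → combE e a ∈ Φ →
    (∑ i, a i) ≤ (n : ℤ) →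
    ∃ b : Fin 7 → ℤ, ∃ w ∈ W₀, w (combE e a) = combE e b ∧ b 0 = a 0 ∧ (∀ i, 0 ≤ b i) ∧
      combE e b ∈ Φ ∧ (∀ j, j ≠ 0 → kZ b j ≤ 0) := by
  intro n
  induction n with
  | zero =>
    intro a hp h0 hv hs
    exfalso
    have h1 : a 0 ≤ ∑ k, a k := Finset.single_le_sum (fun k _ => hp k) (Finset.mem_univ 0)
    omega
  | succ n ih =>
    intro a hp h0 hv hs
    by_cases hd : ∀ j, j ≠ (0 : Fin 7) → kZ a j ≤ 0
    · exact ⟨a, 1, one_mem _, by simp, rfl, hp, hv, hd⟩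
    · push_neg at hd
      obtain ⟨j, hj0, hkj⟩ := hd
      set a' := Function.update a j (a j - kZ a j) with ha'
      have hv' : combE e a' ∈ Φ := root_update_mem hΦ hbase hC hv j
      have h0' : a' 0 = a 0 := Function.update_of_ne (Ne.symm hj0) _ _
      have hp' : ∀ i, 0 ≤ a' i := by
        rcases sign_dichotomy hΦ hbase hv' with h | h
        · exact h
        · exfalso; have := h 0; omega
      have hdiff : ∑ i, a' i = (∑ i, a i) - kZ a j := by
        have hh : ∑ i, (a' i - a i) = -kZ a j := by
          rw [Finset.sum_eq_single j]
          · rw [ha', Function.update_self]; ring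
          · intro b _ hbj; rw [ha', Function.update_of_ne hbj]; ring
          · intro h; exact absurd (Finset.mem_univ j) h
        rw [Finset.sum_sub_distrib] at hh
        omega
      have hsum' : ∑ i, a' i ≤ (n : ℤ) := by rw [hdiff]; push_cast at hs ⊢; omega
      obtain ⟨b, w, hwW, hwv, hb0, hbp, hbv, hbd⟩ := ih a' hp' (by omega) hv' hsum'
      refine ⟨b, w * Submodule.reflection ((Submodule.span ℝ {e j})ᗮ), mul_mem hwW ?_, ?_, by omega,
        hbp, hbv, hbd⟩
      · rw [hW₀]; exact Subgroup.subset_closure ⟨j, hj0, rfl⟩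
      · rw [LinearIsometryEquiv.coe_mul, Function.comp_apply, refl_comb hΦ hbase hC]
        exact hwv

lemma orbit_of_pos {a b : Fin 7 → ℤ} (hpa : ∀ i, 0 ≤ a i) (hpb : ∀ i, 0 ≤ b i)
    (h0 : 1 ≤ a 0) (hba : b 0 = a 0) (hva : combE e a ∈ Φ) (hvb : combE e b ∈ Φ) :
    ∃ w ∈ W₀, w (combE e a) = combE e b := by
  obtain ⟨a₁, w₁, hw₁, hwv₁, h₁0, h₁p, h₁v, h₁d⟩ :=
    descend hΦ hbase hC hW₀ (∑ i, a i).toNat a hpa h0 hva (Int.self_le_toNat _)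
  obtain ⟨b₁, w₂, hw₂, hwv₂, h₂0, h₂p, h₂v, h₂d⟩ :=
    descend hΦ hbase hC hW₀ (∑ i, b i).toNat b hpb (by omega) hvb (Int.self_le_toNat _)
  have hQ₁ : QZ a₁ = 2 := QZ_eq_two hΦ hbase hC _ h₁v
  have hQ₂ : QZ b₁ = 2 := QZ_eq_two hΦ hbase hC _ h₂v
  -- both are antidominant with the same 0-coordinate, so they are equal
  have heq : a₁ = b₁ := by
    have Ha := classify (a₁ 0) (a₁ 1) (a₁ 2) (a₁ 3) (a₁ 4) (a₁ 5) (a₁ 6)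
      (h₁p 1) (h₁p 2) (h₁p 3) (h₁p 4) (h₁p 5) (h₁p 6) (by omega)
      (by have := h₁d 1 (by decide); rwa [kZ_exp1] at this)
      (by have := h₁d 2 (by decide); rwa [kZ_exp2] at this)
      (by have := h₁d 3 (by decide); rwa [kZ_exp3] at this)
      (by have := h₁d 4 (by decide); rwa [kZ_exp4] at this)
      (by have := h₁d 5 (by decide); rwa [kZ_exp5] at this)
      (by have := h₁d 6 (by decide); rwa [kZ_exp6] at this)
      (by rw [← QZ_expand]; exact hQ₁)
    have Hb := classify (b₁ 0) (b₁ 1) (b₁ 2) (b₁ 3) (b₁ 4) (b₁ 5) (b₁ 6)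
      (h₂p 1) (h₂p 2) (h₂p 3) (h₂p 4) (h₂p 5) (h₂p 6) (by omega)
      (by have := h₂d 1 (by decide); rwa [kZ_exp1] at this)
      (by have := h₂d 2 (by decide); rwa [kZ_exp2] at this)
      (by have := h₂d 3 (by decide); rwa [kZ_exp3] at this)
      (by have := h₂d 4 (by decide); rwa [kZ_exp4] at this)
      (by have := h₂d 5 (by decide); rwa [kZ_exp5] at this)
      (by have := h₂d 6 (by decide); rwa [kZ_exp6] at this)
      (by rw [← QZ_expand]; exact hQ₂)
    have hcc : a₁ 0 = b₁ 0 := by omega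
    obtain ⟨q0, q1, q2, q3, q4, q5, q6⟩ :
        a₁ 0 = b₁ 0 ∧ a₁ 1 = b₁ 1 ∧ a₁ 2 = b₁ 2 ∧ a₁ 3 = b₁ 3 ∧ a₁ 4 = b₁ 4 ∧ a₁ 5 = b₁ 5 ∧
          a₁ 6 = b₁ 6 := by omega
    funext i
    fin_cases i
    exacts [q0, q1, q2, q3, q4, q5, q6]
  refine ⟨w₂⁻¹ * w₁, mul_mem (inv_mem hw₂) hw₁, ?_⟩
  rw [LinearIsometryEquiv.coe_mul, Function.comp_apply, hwv₁, heq, ← hwv₂,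
    LinearIsometryEquiv.coe_inv]
  exact w₂.symm_apply_apply _

end Geo3

/-- Lemma 2.4 (E₇ case): e₁ (index 0) is the trivalent node; for roots `v = ∑ αᵢ eᵢ` with `α₁ ≠ 0`, the coefficient `α₁`
is a complete invariant of the orbits of the subgroup `W₀` generated by the reflections in
the hyperplanes orthogonal to `e₂, …`. -/
theorem statement5
    {V : Type*} [NormedAddCommGroup V] [InnerProductSpace ℝ V] [FiniteDimensional ℝ V]
    (hdim : Module.finrank ℝ V = 7)
    (Φ : Set V) (hΦ : IsReducedCrystallographicRootSystem Φ)
    (e : Fin 7 → V) (hbase : IsBase Φ e)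
    (hC : ∀ i j, 2 * ⟪e i, e j⟫ / ⟪e j, e j⟫ = cartanMatrix i j)
    (W₀ : Subgroup (V ≃ₗᵢ[ℝ] V))
    (hW₀ : W₀ = Subgroup.closure
      {w | ∃ j : Fin 7, j ≠ 0 ∧ w = Submodule.reflection ((Submodule.span ℝ {e j})ᗮ)})
    (α α' : Fin 7 → ℤ)
    (hv : (∑ i, (α i : ℝ) • e i) ∈ Φ) (hv' : (∑ i, (α' i : ℝ) • e i) ∈ Φ)
    (hα : α 0 ≠ 0) :
    (∃ w ∈ W₀, w (∑ i, (α i : ℝ) • e i) = ∑ i, (α' i : ℝ) • e i) ↔ α' 0 = α 0 := by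
  have hvΦ : combE e α ∈ Φ := hv
  have hvΦ' : combE e α' ∈ Φ := hv'
  constructor
  · rintro ⟨w, hwW, hwv⟩
    -- construct the coordinate functional
    have card : Fintype.card (Fin 7) = Module.finrank ℝ V := by rw [hdim, Fintype.card_fin]
    set B : Module.Basis (Fin 7) ℝ V := basisOfLinearIndependentOfCardEqFinrank hbase.indep card
      with hB
    have hBe : (B : Fin 7 → V) = e := coe_basisOfLinearIndependentOfCardEqFinrank _ _
    set f : V →ₗ[ℝ] ℝ := B.coord 0 with hf
    have hfe : ∀ i, f (e i) = if i = 0 then 1 else 0 := by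
      intro i
      rw [← congrFun hBe i, hf, Module.Basis.coord_apply, Module.Basis.repr_self, Finsupp.single_apply]
    have hfc : ∀ a : Fin 7 → ℤ, f (combE e a) = ((a 0 : ℤ) : ℝ) := by
      intro a
      rw [combE, map_sum]
      simp only [map_smul, smul_eq_mul, hfe]
      rw [Finset.sum_eq_single 0]
      · simp
      · intro b _ hb0; rw [if_neg hb0, mul_zero]
      · intro h; exact absurd (Finset.mem_univ 0) h
    have hinv : ∀ w ∈ W₀, ∀ x : V, f (w x) = f x := by
      intro w hw
      rw [hW₀] at hw
      refine Subgroup.closure_induction (p := fun g _ => ∀ x : V, f (g x) = f x) ?_ ?_ ?_ ?_ hw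
      · rintro g ⟨j, hj, rfl⟩ x
        rw [refl_formula, map_sub, map_smul, smul_eq_mul, hfe, if_neg hj, mul_zero, sub_zero]
      · intro x; rw [LinearIsometryEquiv.coe_one, id_eq]
      · intro g h' _ _ ihg ihh' x
        rw [LinearIsometryEquiv.coe_mul, Function.comp_apply, ihg, ihh']
      · intro g _ ihg x
        have h1 := ihg (g⁻¹ x)
        rw [show g (g⁻¹ x) = x from by
          rw [LinearIsometryEquiv.coe_inv]; exact g.apply_symm_apply x] at h1
        exact h1.symm
    have h1 := hinv w hwW (∑ i, (α i : ℝ) • e i)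
    rw [hwv] at h1
    have hA : f (∑ i, (α i : ℝ) • e i) = ((α 0 : ℤ) : ℝ) := hfc α
    have hA' : f (∑ i, (α' i : ℝ) • e i) = ((α' 0 : ℤ) : ℝ) := hfc α'
    rw [hA, hA'] at h1
    exact_mod_cast h1
  · intro h0
    rcases (by omega : 1 ≤ α 0 ∨ α 0 ≤ -1) with hpos | hneg
    · have hp : ∀ i, 0 ≤ α i := by
        rcases sign_dichotomy hΦ hbase hvΦ with h | h
        · exact h
        · exfalso; have := h 0; omega
      have hp' : ∀ i, 0 ≤ α' i := by
        rcases sign_dichotomy hΦ hbase hvΦ' with h | h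
        · exact h
        · exfalso; have := h 0; omega
      obtain ⟨w, hwW, hwv⟩ :=
        orbit_of_pos hΦ hbase hC hW₀ hp hp' hpos (by omega) hvΦ hvΦ'
      exact ⟨w, hwW, hwv⟩
    · have hn : ∀ i, α i ≤ 0 := by
        rcases sign_dichotomy hΦ hbase hvΦ with h | h
        · exfalso; have := h 0; omega
        · exact h
      have hn' : ∀ i, α' i ≤ 0 := by
        rcases sign_dichotomy hΦ hbase hvΦ' with h | h
        · exfalso; have := h 0; omega
        · exact h
      have hna : combE e (fun i => -α i) ∈ Φ := by
        rw [combE_neg]; exact neg_mem hΦ hvΦ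
      have hna' : combE e (fun i => -α' i) ∈ Φ := by
        rw [combE_neg]; exact neg_mem hΦ hvΦ'
      obtain ⟨w, hwW, hwv⟩ :=
        orbit_of_pos hΦ hbase hC hW₀ (a := fun i => -α i) (b := fun i => -α' i)
          (fun i => by show (0:ℤ) ≤ -α i; have := hn i; omega)
          (fun i => by show (0:ℤ) ≤ -α' i; have := hn' i; omega)
          (by show (1:ℤ) ≤ -α 0; omega) (by show -α' 0 = -α 0; omega) hna hna'
      refine ⟨w, hwW, ?_⟩
      rw [combE_neg, combE_neg] at hwv
      rw [map_neg] at hwv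
      have := neg_injective hwv
      exact this
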